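/- For the optimal CHSH_n quantum strategy on the EPR state, the winning probability on every valid input pair equals cos²(π/(4n)): if Alice measures the observable cos(aπ/n)σ_z + sin(aπ/n)σ_x on input a ∈ {0,…,n−2} and cos(−π/n)σ_z + sin(−π/n)σ_x on input n−1, and Bob measures cos((b−1/2)π/n)σ_z + sin((b−1/2)π/n)σ_x on input b, then for each valid (a,b) the probability of the CHSH_n winning condition is cos²(π/(4n)). -/

import Mathlib

open Matrix

noncomputable section

/-- Pauli σ_z. -/
def pauliZ : Matrix (Fin 2) (Fin 2) ℂ := !![1, 0; 0, -1]

/-- Pauli σ_x. -/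
def pauliX : Matrix (Fin 2) (Fin 2) ℂ := !![0, 1; 1, 0]

/-- The observable `cos θ σ_z + sin θ σ_x`. -/
def rotObs (θ : ℝ) : Matrix (Fin 2) (Fin 2) ℂ :=
  ((Real.cos θ : ℝ) : ℂ) • pauliZ + ((Real.sin θ : ℝ) : ℂ) • pauliX

/-- Spectral projection of a ±1-valued observable: eigenvalue `+1` corresponds to
outcome bit `false`, `−1` to outcome bit `true`. -/
def outcomeProj (M : Matrix (Fin 2) (Fin 2) ℂ) (x : Bool) :
    Matrix (Fin 2) (Fin 2) ℂ :=
  ((2 : ℂ))⁻¹ • (1 + (if x then (-1 : ℂ) else 1) • M)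

/-- The EPR state `(|00⟩ + |11⟩)/√2`. -/
def eprVec : Fin 2 × Fin 2 → ℂ :=
  fun p => if p.1 = p.2 then (((Real.sqrt 2)⁻¹ : ℝ) : ℂ) else 0

/-- Alice's measurement angle on input `a` in the optimal CHSH_n strategy. -/
def chshnAliceAngle (n : ℕ) (a : Fin n) : ℝ :=
  if a.val = n - 1 then -(Real.pi / n) else a.val * Real.pi / n

/-- Bob's measurement angle on input `b` in the optimal CHSH_n strategy. -/
def chshnBobAngle (n : ℕ) (b : Fin n) : ℝ :=
  (b.val - 1/2) * Real.pi / n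

/-- The probability (as a complex number) that the EPR strategy with the given
measurement angles yields outcomes `(x, y)` on inputs `(a, b)`. -/
def chshnOutcomeProb (n : ℕ) (a b : Fin n) (x y : Bool) : ℂ :=
  ∑ i : Fin 2 × Fin 2, (starRingEnd ℂ) (eprVec i) *
    ((Matrix.kronecker (outcomeProj (rotObs (chshnAliceAngle n a)) x)
      (outcomeProj (rotObs (chshnBobAngle n b)) y)).mulVec eprVec) i

/-!
On the EPR state `⟨ψ| A ⊗ B |ψ⟩ = tr (A Bᵀ) / 2`. For the projections `(1 ± M)/2` onto the
eigenspaces of the traceless symmetric observables `M = rotObs θ`, with `tr (rotObs α * rotObs β)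
= 2 cos (α - β)`, this makes the outcomes agree with probability `(1 + cos (α - β)) / 2`.
On every valid input pair Alice's and Bob's angles differ by `±π/(2n)`, except on `(n-1, n-1)`,
where they differ by `π/(2n) - π`; there the game asks for disagreement, which happens with
probability `(1 + cos (π/(2n))) / 2 = cos² (π/(4n))` as well.
-/

open scoped Kronecker

lemma eprVec_expectation (A B : Matrix (Fin 2) (Fin 2) ℂ) :
    ∑ i : Fin 2 × Fin 2, (starRingEnd ℂ) (eprVec i) * ((A ⊗ₖ B) *ᵥ eprVec) i
      = (A * Bᵀ).trace / 2 := by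
  have hsq : ((Real.sqrt 2 : ℂ))⁻¹ ^ 2 = 2⁻¹ := by
    rw [inv_pow, ← Complex.ofReal_pow, Real.sq_sqrt zero_le_two, Complex.ofReal_ofNat]
  simp only [Fintype.sum_prod_type, Fin.sum_univ_two, eprVec, mulVec, dotProduct,
    kronecker_apply, trace, diag, mul_apply, transpose_apply, Fin.isValue, ↓reduceIte,
    zero_ne_one, one_ne_zero, Complex.ofReal_inv, map_inv₀, Complex.conj_ofReal, map_zero,
    mul_zero, zero_mul, add_zero, zero_add]
  linear_combination (A 0 0 * B 0 0 + A 0 1 * B 0 1 + A 1 0 * B 1 0 + A 1 1 * B 1 1) * hsq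

lemma transpose_rotObs (θ : ℝ) : (rotObs θ)ᵀ = rotObs θ := by
  ext i j; fin_cases i <;> fin_cases j <;> simp [rotObs, pauliZ, pauliX]

lemma trace_rotObs (θ : ℝ) : (rotObs θ).trace = 0 := by
  simp [rotObs, pauliZ, pauliX, trace]

lemma trace_rotObs_mul_rotObs (α β : ℝ) :
    (rotObs α * rotObs β).trace = 2 * Real.cos (α - β) := by
  simp [rotObs, pauliZ, pauliX, trace, Real.cos_sub]
  ring

lemma trace_outcomeProj_mul_outcomeProj {M N : Matrix (Fin 2) (Fin 2) ℂ}
    (hM : M.trace = 0) (hN : N.trace = 0) (x y : Bool) :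
    (outcomeProj M x * outcomeProj N y).trace
      = (1 + (if x = y then 1 else -1) * (M * N).trace / 2) / 2 := by
  cases x <;> cases y <;>
    simp [outcomeProj, mul_add, add_mul, trace_add, trace_smul, hM, hN] <;> ring

lemma transpose_outcomeProj {M : Matrix (Fin 2) (Fin 2) ℂ} (hM : Mᵀ = M) (x : Bool) :
    (outcomeProj M x)ᵀ = outcomeProj M x := by
  rw [outcomeProj, transpose_smul, transpose_add, transpose_one, transpose_smul, hM]

lemma eprVec_outcomeProb (α β : ℝ) (x y : Bool) :
    ∑ i : Fin 2 × Fin 2, (starRingEnd ℂ) (eprVec i) *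
      ((outcomeProj (rotObs α) x ⊗ₖ outcomeProj (rotObs β) y) *ᵥ eprVec) i
      = (1 + (if x = y then 1 else -1) * Real.cos (α - β)) / 4 := by
  rw [eprVec_expectation, transpose_outcomeProj (transpose_rotObs β),
    trace_outcomeProj_mul_outcomeProj (trace_rotObs α) (trace_rotObs β),
    trace_rotObs_mul_rotObs]
  ring

lemma chshnOutcomeProb_eq (n : ℕ) (a b : Fin n) (x y : Bool) :
    chshnOutcomeProb n a b x y = (1 + (if x = y then 1 else -1) *
      Real.cos (chshnAliceAngle n a - chshnBobAngle n b)) / 4 :=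
  eprVec_outcomeProb _ _ x y

lemma sum_agree_chshnOutcomeProb (n : ℕ) (a b : Fin n) :
    ∑ x : Bool, ∑ y : Bool, (if x = y then chshnOutcomeProb n a b x y else 0)
      = (1 + Real.cos (chshnAliceAngle n a - chshnBobAngle n b)) / 2 := by
  simp only [chshnOutcomeProb_eq, Fintype.sum_bool]
  norm_num
  ring

lemma sum_disagree_chshnOutcomeProb (n : ℕ) (a b : Fin n) :
    ∑ x : Bool, ∑ y : Bool, (if x ≠ y then chshnOutcomeProb n a b x y else 0)
      = (1 - Real.cos (chshnAliceAngle n a - chshnBobAngle n b)) / 2 := by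
  simp only [chshnOutcomeProb_eq, Fintype.sum_bool]
  norm_num
  ring

section Angles

open Real

variable {n : ℕ}

lemma chshnAliceAngle_sub_chshnBobAngle_self {a : Fin n} (ha : a.val ≠ n - 1) :
    chshnAliceAngle n a - chshnBobAngle n a = π / (2 * n) := by
  have hn : (n : ℝ) ≠ 0 := Nat.cast_ne_zero.mpr (Fin.pos a).ne'
  rw [chshnAliceAngle, if_neg ha, chshnBobAngle]
  field_simp
  ring

lemma chshnAliceAngle_sub_chshnBobAngle_add_one [NeZero n] (a : Fin n) :
    chshnAliceAngle n a - chshnBobAngle n (a + 1) = -(π / (2 * n)) := by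
  have hn : (n : ℝ) ≠ 0 := Nat.cast_ne_zero.mpr (NeZero.ne n)
  by_cases ha : a.val = n - 1
  · have hb : (a + 1).val = 0 := by
      rw [Fin.val_add, Fin.val_one', ha, Nat.add_mod_mod, Nat.sub_add_cancel NeZero.one_le,
        Nat.mod_self]
    rw [chshnAliceAngle, if_pos ha, chshnBobAngle, hb]
    field_simp
    ring
  · have hb : (a + 1).val = a.val + 1 := by
      rw [Fin.val_add, Fin.val_one', Nat.add_mod_mod, Nat.mod_eq_of_lt (by omega)]
    rw [chshnAliceAngle, if_neg ha, chshnBobAngle, hb]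
    field_simp
    push_cast
    ring

lemma chshnAliceAngle_sub_chshnBobAngle_of_last {a b : Fin n} (ha : a.val = n - 1)
    (hb : b.val = n - 1) :
    chshnAliceAngle n a - chshnBobAngle n b = π / (2 * n) - π := by
  have hn : (n : ℝ) ≠ 0 := Nat.cast_ne_zero.mpr (Fin.pos a).ne'
  rw [chshnAliceAngle, if_pos ha, chshnBobAngle, hb, Nat.cast_sub (Fin.pos a)]
  field_simp
  ring

lemma cos_chshnAliceAngle_sub_chshnBobAngle [NeZero n] {a b : Fin n}
    (hab : b = a ∨ b = a + 1) (hlast : ¬(a.val = n - 1 ∧ b.val = n - 1)) :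
    cos (chshnAliceAngle n a - chshnBobAngle n b) = cos (π / (2 * n)) := by
  rcases hab with rfl | rfl
  · rw [chshnAliceAngle_sub_chshnBobAngle_self fun h => hlast ⟨h, h⟩]
  · rw [chshnAliceAngle_sub_chshnBobAngle_add_one, cos_neg]

lemma cos_sq_pi_div_four_mul (n : ℕ) :
    cos (π / (4 * n)) ^ 2 = (1 + cos (π / (2 * n))) / 2 := by
  rw [cos_sq, show 2 * (π / (4 * n)) = π / (2 * n) by ring]
  ring

end Angles

theorem chshn_quantum_value (n : ℕ) [NeZero n]
    (a b : Fin n) (hab : b = a ∨ b = a + 1) :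
    (if a.val = n - 1 ∧ b.val = n - 1 then
      ∑ x : Bool, ∑ y : Bool, (if x ≠ y then chshnOutcomeProb n a b x y else 0)
    else
      ∑ x : Bool, ∑ y : Bool, (if x = y then chshnOutcomeProb n a b x y else 0))
    = (((Real.cos (Real.pi / (4 * n)))^2 : ℝ) : ℂ) := by
  rw [cos_sq_pi_div_four_mul]
  split_ifs with hlast
  · rw [sum_disagree_chshnOutcomeProb,
      chshnAliceAngle_sub_chshnBobAngle_of_last hlast.1 hlast.2, Real.cos_sub_pi]
    push_cast
    ring
  · rw [sum_agree_chshnOutcomeProb, cos_chshnAliceAngle_sub_chshnBobAngle hab hlast]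
    push_cast
    ring
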